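/- arXiv:1910.12320 — 2 statements merged into one kernel-verified Lean document; each statement's English description precedes it below -/
import Mathlib

section
/- Let K be a separated topological field (a topological division ring that is Hausdorff, with inversion continuous away from 0) in which the image under x ↦ x⁻¹ of every Cauchy filter on K \ {0} which does not have 0 as a cluster point is again a Cauchy filter. Then the separated completion K̂, with its ring structure and with inversion defined by extending x ↦ x⁻¹ by continuity on nonzero elements and setting 0⁻¹ = 0, is a topological field: every nonzero element of K̂ is invertible and inversion is continuous at every nonzero point of K̂. -/
open UniformSpace UniformSpace.Completion Filter Topology
open scoped Uniformity

theorem completion_of_completableTopField_is_topological_field_general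
    {K : Type*} [Field K] [UniformSpace K] [IsTopologicalDivisionRing K] [IsUniformAddGroup K]
    [T0Space K]
    (nice : ∀ F : Filter K, Cauchy F → 𝓝 (0 : K) ⊓ F = ⊥ →
      Cauchy (Filter.map (fun x : K => x⁻¹) F)) :
    ((0 : Completion K)⁻¹ = 0) ∧
    (∀ x : Completion K, x ≠ 0 → x * x⁻¹ = 1) ∧
    (∀ x : Completion K, x ≠ 0 →
      ContinuousAt (fun y : Completion K => y⁻¹) x) := by
  have : CompletableTopField K := ⟨nice⟩
  exact ⟨inv_zero, fun _ hx => mul_inv_cancel₀ hx, fun _ hx => continuousAt_inv₀ hx⟩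

/-- Completion of a completable topological field: if `K` is a separated topological field in
which the image under `x ↦ x⁻¹` of every Cauchy filter without `0` as a cluster point is a
Cauchy filter, then the completion of `K` (with inversion extended by continuity and
`0⁻¹ = 0`) is a topological field: every nonzero element is invertible (with `x * x⁻¹ = 1`
and `0⁻¹ = 0`), and inversion is continuous at every nonzero point. -/
theorem completion_of_completableTopField_is_topological_field
    {K : Type*} [Field K] [UniformSpace K] [IsTopologicalDivisionRing K] [IsUniformAddGroup K]
    (hK : 𝓤 K = Filter.comap (fun p : K × K => p.1 - p.2) (𝓝 0))
    [T0Space K]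
    (nice : ∀ F : Filter K, Cauchy F → 𝓝 (0 : K) ⊓ F = ⊥ →
      Cauchy (Filter.map (fun x : K => x⁻¹) F)) :
    ((0 : Completion K)⁻¹ = 0) ∧
    (∀ x : Completion K, x ≠ 0 → x * x⁻¹ = 1) ∧
    (∀ x : Completion K, x ≠ 0 →
      ContinuousAt (fun y : Completion K => y⁻¹) x) :=
  completion_of_completableTopField_is_topological_field_general nice
end

section
/- Let A be a topological commutative ring admitting an open subring A₀ whose induced topology is the I-adic topology for some finitely generated ideal I of A₀ (i.e. A is a Huber ring). Let T be a subset of A such that the ideal of A generated by T is open. Then for every open additive subgroup U of A, the set T·U — the additive subgroup of A generated by all products t·u with t ∈ T and u in the ℤ-span of U — is open in A. -/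
/-!
Since `I` is adic and `span T` is open, `Iⁿ ⊆ span T` for some `n`. Every `a ∈ span T` satisfies
`a * x ∈ T·U` for all `x` near `0`, because this property of `a` is stable under the ideal
operations. As `Iⁿ` is finitely generated, a single `s` then works for all of `Iⁿ` at once, so
`Iⁿ⁺ˢ = Iⁿ * Iˢ ⊆ T·U`. Being open in the open subring `A₀`, `Iⁿ⁺ˢ` is open in `A`, and an additive
subgroup containing a neighbourhood of `0` is open.
-/

open Topology

section TopologicalRing

variable {A : Type*} [CommRing A] [TopologicalSpace A]

theorem mul_left_preimage_mem_nhds_zero_of_mem_span [ContinuousMul A] {S : AddSubgroup A}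
    {T : Set A} (hT : ∀ t ∈ T, (t * ·) ⁻¹' (S : Set A) ∈ 𝓝 0) {a : A}
    (ha : a ∈ Ideal.span T) : (a * ·) ⁻¹' (S : Set A) ∈ 𝓝 0 := by
  induction ha using Submodule.span_induction with
  | mem t ht => exact hT t ht
  | zero => simp
  | add a b _ _ ha hb =>
    filter_upwards [ha, hb] with x hax hbx
    simpa [add_mul] using S.add_mem hax hbx
  | smul c a _ ha =>
    have hc : Filter.Tendsto (c * ·) (𝓝 0) (𝓝 0) := by
      simpa using (continuous_const_mul c).tendsto 0
    filter_upwards [hc ha] with x hx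
    simpa [smul_eq_mul, mul_assoc, mul_left_comm] using hx

theorem AddSubgroup.isOpen_of_comap_subtype_mem_nhds [ContinuousAdd A] {A₀ : Subring A}
    (hA₀ : IsOpen (A₀ : Set A)) {S : AddSubgroup A}
    (hS : (S.comap (A₀.subtype : A₀ →+ A) : Set A₀) ∈ 𝓝 0) : IsOpen (S : Set A) := by
  refine S.isOpen_of_mem_nhds (g := 0) (Filter.mem_of_superset
    (hA₀.isOpenMap_subtype_val.image_mem_nhds hS) ?_)
  rintro _ ⟨x, hx, rfl⟩
  exact hx

end TopologicalRing

namespace AddSubgroup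

variable {R : Type*} [CommRing R]

/-- The analogue of `Submodule.colon` for an additive subgroup `S`. -/
def idealColon (S : AddSubgroup R) (K : Ideal R) : Ideal R where
  carrier := {a | ∀ x ∈ K, a * x ∈ S}
  add_mem' ha hb x hx := by simpa [add_mul] using S.add_mem (ha x hx) (hb x hx)
  zero_mem' _ _ := by simp
  smul_mem' c a ha x hx := by
    simpa [smul_eq_mul, mul_assoc, mul_left_comm] using ha (c * x) (K.mul_mem_left c hx)

variable {S : AddSubgroup R} {J K : Ideal R}

theorem idealColon_anti {K' : Ideal R} (h : K ≤ K') : S.idealColon K' ≤ S.idealColon K :=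
  fun _ ha x hx => ha x (h hx)

theorem mul_subset_of_le_idealColon (h : J ≤ S.idealColon K) : ((J * K : Ideal R) : Set R) ⊆ S :=
  fun _ hz => Submodule.mul_induction_on hz (fun _ ha x hx => h ha x hx)
    (fun _ _ => S.add_mem)

theorem exists_le_idealColon_pow [TopologicalSpace R] [IsTopologicalRing R] {I : Ideal R}
    (hI : IsAdic I) (hJ : J.FG) (hS : ∀ a ∈ J, (a * ·) ⁻¹' (S : Set R) ∈ 𝓝 0) :
    ∃ s, J ≤ S.idealColon (I ^ s) := by
  have hle : J ≤ ⨆ s, S.idealColon (I ^ s) := fun a ha => by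
    obtain ⟨s, hs⟩ := (isAdic_iff.mp hI).2 _ (hS a ha)
    exact Ideal.mem_iSup_of_mem s fun x hx => hs hx
  obtain ⟨F, hF⟩ := CompleteLattice.IsCompactElement.exists_finset_of_le_iSup _
    ((Submodule.fg_iff_compact J).mp hJ) _ hle
  exact ⟨F.sup id, hF.trans <| iSup₂_le fun s hs =>
    idealColon_anti (Ideal.pow_le_pow_right (Finset.le_sup (f := id) hs))⟩

end AddSubgroup

/-- In a Huber ring `A` (a topological ring with an open subring whose induced topology is
`I`-adic for a finitely generated ideal `I`), if `T ⊆ A` generates an open ideal, then for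
every open additive subgroup `U` of `A` the additive subgroup `T·U` generated by the
products `t * u` (`t ∈ T`, `u ∈ U`) is open. -/
theorem huber_ring_smul_open_addSubgroup
    {A : Type*} [CommRing A] [TopologicalSpace A] [IsTopologicalRing A]
    (hA : ∃ A₀ : Subring A, IsOpen (A₀ : Set A) ∧
      ∃ I : Ideal A₀, I.FG ∧ IsAdic I)
    {T : Set A} (hT : IsOpen ((Ideal.span T : Ideal A) : Set A))
    (U : OpenAddSubgroup A) :
    IsOpen ((AddSubgroup.closure (Set.image2 (· * ·) T (U : Set A)) : AddSubgroup A) :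
      Set A) := by
  obtain ⟨A₀, hA₀, I, hIfg, hI⟩ := hA
  set S := AddSubgroup.closure (Set.image2 (· * ·) T (U : Set A))
  have hTS : ∀ t ∈ T, (t * ·) ⁻¹' (S : Set A) ∈ 𝓝 0 := fun t ht =>
    Filter.mem_of_superset (U.isOpen.mem_nhds U.zero_mem) fun u hu =>
      AddSubgroup.subset_closure (Set.mem_image2_of_mem ht hu)
  obtain ⟨n, hn⟩ := (isAdic_iff.mp hI).2 _
    (continuous_subtype_val.tendsto (0 : A₀) (hT.mem_nhds (Ideal.span T).zero_mem))
  set S₀ := S.comap (A₀.subtype : A₀ →+ A)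
  have hS₀ : ∀ a ∈ I ^ n, (a * ·) ⁻¹' (S₀ : Set A₀) ∈ 𝓝 0 := fun a ha =>
    continuous_subtype_val.tendsto (0 : A₀)
      (mul_left_preimage_mem_nhds_zero_of_mem_span hTS (hn ha))
  obtain ⟨s, hs⟩ := S₀.exists_le_idealColon_pow hI (Ideal.FG.pow hIfg) hS₀
  refine AddSubgroup.isOpen_of_comap_subtype_mem_nhds hA₀ (Filter.mem_of_superset ?_
    (S₀.mul_subset_of_le_idealColon hs))
  rw [← pow_add]
  exact ((isAdic_iff.mp hI).1 (n + s)).mem_nhds (zero_mem _)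
end
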